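/- arXiv:0707.1539 — 3 statements merged into one kernel-verified Lean document; each statement's English description precedes it below -/
import Mathlib

section
/- Let R = ℤ/4ℤ, let f be a nilpotent element of R[x], let β be the R-automorphism of R[x] defined by β(x) = -x + 1 + f, and let y = x·(-x + 1). If β has order 2 (equivalently, f ∈ R[y]), then the ring of invariants R[x]^⟨β⟩ equals R[y + x·f], the R-subalgebra generated by the single element y + x·f. -/
/-!
Put `w = x·β(x)`. Since `β² = 1`, `β(w) = β(x)·x = w`, so `R[w]` consists of invariants.
Conversely, `f` is nilpotent, hence `0` modulo `2`, so reduction modulo `2` turns `β` into the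
involution `x ↦ 1 - x` of `𝔽₂[x]` and `w` into `x(1 - x)`. Over any commutative ring the
invariants of `x ↦ 1 - x` are generated by `x(1 - x)` (divide by the monic `x(x - 1)` and compare
degrees). Hence an invariant `g` agrees modulo `2` with some `p ∈ R[w]`; then `g - p = 2u` with
`u` invariant modulo `2`, and lifting `u` in the same way gives `g ∈ R[w]` because `4 = 0`.
-/

open Polynomial

theorem AlgEquiv.forall_mem_zpowers_apply_eq_iff {R A : Type*} [CommSemiring R] [Semiring A]
    [Algebra R A] (β : A ≃ₐ[R] A) (a : A) :
    (∀ σ ∈ Subgroup.zpowers β, σ a = a) ↔ β a = a := by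
  simpa only [Subgroup.forall_mem_zpowers, MulAction.mem_fixedBy, AlgEquiv.smul_def] using
    MulAction.mem_fixedBy_zpowers_iff_mem_fixedBy (g := β) (a := a)

theorem AlgHom.apply_eq_self_of_mem_adjoin_singleton {R A : Type*} [CommSemiring R] [Semiring A]
    [Algebra R A] (β : A →ₐ[R] A) {w : A} (hw : β w = w) {a : A}
    (ha : a ∈ Algebra.adjoin R {w}) : β a = a :=
  AlgHom.adjoin_le_equalizer β (AlgHom.id R A) (by simpa using hw) ha

namespace Polynomial

theorem map_algHom_apply {R S : Type*} [CommSemiring R] [CommSemiring S] (φ : R →+* S)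
    (β : R[X] →ₐ[R] R[X]) (p : R[X]) : (β p).map φ = (p.map φ).comp ((β X).map φ) := by
  rw [← map_comp, comp_eq_aeval, aeval_algHom_apply, aeval_X_left_apply]

theorem exists_mem_adjoin_map_eq {R S : Type*} [CommSemiring R] [CommSemiring S]
    {φ : R →+* S} (hφ : Function.Surjective φ) (w : R[X]) {q : S[X]}
    (hq : q ∈ Algebra.adjoin S {w.map φ}) : ∃ p ∈ Algebra.adjoin R {w}, p.map φ = q := by
  rw [Algebra.adjoin_singleton_eq_range_aeval] at hq ⊢
  obtain ⟨r, rfl⟩ := hq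
  obtain ⟨r, rfl⟩ := map_surjective φ hφ r
  refine ⟨aeval w r, ⟨r, rfl⟩, ?_⟩
  exact map_aeval_eq_aeval_map (ψ := mapRingHom φ) (mapRingHom_comp_C φ).symm r w

theorem mem_adjoin_X_mul_one_sub_X_of_comp_one_sub_X {R : Type*} [CommRing R]
    {q : R[X]} (hq : q.comp (1 - X) = q) : q ∈ Algebra.adjoin R {X * (1 - X)} := by
  nontriviality R
  set A := Algebra.adjoin R {(X * (1 - X) : R[X])}
  have hC (c : R) : C c ∈ A := Subalgebra.algebraMap_mem A c
  set z : R[X] := X * (X - 1)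
  have hz : z.Monic := monic_X.mul (by simpa using monic_X_sub_C (1 : R))
  have hz_deg : z.natDegree = 2 := by unfold z; compute_degree!
  have hz_mem : z ∈ A := by
    rw [show z = -(X * (1 - X)) by simp [z]; ring]
    exact neg_mem (Algebra.subset_adjoin rfl)
  induction h : q.natDegree using Nat.strong_induction_on generalizing q with
  | _ n ih =>
    set q₁ := q /ₘ z
    have hmod : q %ₘ z = C ((q %ₘ z).coeff 1) * X + C ((q %ₘ z).coeff 0) :=
      have hlt : (q %ₘ z).degree < 2 := by
        simpa [degree_eq_natDegree hz.ne_zero, hz_deg] using degree_modByMonic_lt q hz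
      eq_X_add_C_of_degree_le_one (Order.le_of_lt_succ (by exact_mod_cast hlt))
    obtain ⟨a, b, hdiv⟩ : ∃ a b, C a * X + C b + z * q₁ = q :=
      ⟨_, _, by rw [← hmod, modByMonic_add_div q z]⟩
    have hsym : z * (q₁.comp (1 - X) - q₁) = C a * (2 * X - 1) := by
      have := congrArg (·.comp (1 - X)) hdiv
      simp only [add_comp, mul_comp, sub_comp, C_comp, X_comp, one_comp, hq, z] at this
      linear_combination this - hdiv
    have hq₁ : q₁.comp (1 - X) = q₁ := by
      by_contra hne
      have hdeg := congrArg natDegree hsym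
      rw [hz.natDegree_mul' (sub_ne_zero.mpr hne), hz_deg] at hdeg
      have : (C a * (2 * X - 1)).natDegree ≤ 1 := by compute_degree
      omega
    have ha : a = 0 := by simpa [hq₁] using congrArg (coeff · 0) hsym
    have hq₁_mem : q₁ ∈ A := by
      rcases Nat.lt_or_ge q₁.natDegree n with hlt | hge
      · exact ih _ hlt hq₁ rfl
      · have hq₁_deg : q₁.natDegree = 0 := by
          rw [natDegree_divByMonic q hz, hz_deg] at hge ⊢; omega
        rw [eq_C_of_natDegree_eq_zero hq₁_deg]
        exact hC _
    rw [← hdiv, ha, C_0, zero_mul, zero_add]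
    exact add_mem (hC b) (mul_mem hz_mem hq₁_mem)

end Polynomial

abbrev ZMod.castHomFourTwo : ZMod 4 →+* ZMod 2 := ZMod.castHom (by norm_num) (ZMod 2)

namespace Polynomial

theorem map_castHomFourTwo_eq_zero_iff (t : (ZMod 4)[X]) :
    t.map ZMod.castHomFourTwo = 0 ↔ 2 * t = 0 := by
  have h2 : (2 : (ZMod 4)[X]) = C 2 := (map_ofNat C 2).symm
  simp only [Polynomial.ext_iff, coeff_map, coeff_zero, h2, coeff_C_mul]
  exact forall_congr' fun n ↦ by generalize t.coeff n = a; revert a; decide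

theorem exists_eq_two_mul_of_map_castHomFourTwo_eq_zero {t : (ZMod 4)[X]}
    (ht : t.map ZMod.castHomFourTwo = 0) : ∃ u, t = 2 * u := by
  have hker : RingHom.ker ZMod.castHomFourTwo = Ideal.span {2} := by
    ext a
    simp only [RingHom.mem_ker, Ideal.mem_span_singleton, dvd_def]
    revert a; decide
  have ht' : t ∈ RingHom.ker (mapRingHom ZMod.castHomFourTwo) := ht
  rw [ker_mapRingHom, hker, Ideal.map_span, Set.image_singleton, Ideal.mem_span_singleton] at ht'
  obtain ⟨u, rfl⟩ := ht'
  exact ⟨u, by rw [map_ofNat]⟩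

theorem mem_adjoin_of_apply_eq_self (β : (ZMod 4)[X] →ₐ[ZMod 4] (ZMod 4)[X]) {w : (ZMod 4)[X]}
    (hβw : β w = w) (hβ : (β X).map ZMod.castHomFourTwo = 1 - X)
    (hw : w.map ZMod.castHomFourTwo = X * (1 - X)) {g : (ZMod 4)[X]} (hg : β g = g) :
    g ∈ Algebra.adjoin (ZMod 4) {w} := by
  have lift (t : (ZMod 4)[X]) (ht : (β t).map ZMod.castHomFourTwo = t.map ZMod.castHomFourTwo) :
      ∃ p ∈ Algebra.adjoin (ZMod 4) {w}, (t - p).map ZMod.castHomFourTwo = 0 := by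
    rw [map_algHom_apply, hβ] at ht
    obtain ⟨p, hp, hpt⟩ := exists_mem_adjoin_map_eq (ZMod.ringHom_surjective _) w
      (hw ▸ mem_adjoin_X_mul_one_sub_X_of_comp_one_sub_X ht)
    exact ⟨p, hp, by rw [Polynomial.map_sub, hpt, sub_self]⟩
  obtain ⟨p, hp, hgp⟩ := lift g (by rw [hg])
  obtain ⟨u, hu⟩ := exists_eq_two_mul_of_map_castHomFourTwo_eq_zero hgp
  have hβu : 2 * (β u - u) = 0 := by
    have h := congrArg β hu
    rw [map_sub, hg, β.apply_eq_self_of_mem_adjoin_singleton hβw hp, map_mul, map_ofNat] at h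
    linear_combination hu - h
  obtain ⟨p', hp', hup'⟩ := lift u (by
    rw [← sub_eq_zero, ← Polynomial.map_sub, map_castHomFourTwo_eq_zero_iff]; exact hβu)
  have hg_eq : g = p + (p' + p') := by
    linear_combination hu + (map_castHomFourTwo_eq_zero_iff _).1 hup'
  exact hg_eq ▸ add_mem hp (add_mem hp' hp')

end Polynomial

/-- Theorem: over `R = ℤ/4ℤ`, if `f` is nilpotent, `β(x) = -x + 1 + f` and `β` has order 2,
then the ring of invariants of `⟨β⟩` is `R[y + x·f]` where `y = x·(-x+1)`. -/
theorem zmod4_beta_f_order_two_invariants (f : (ZMod 4)[X]) (hf : IsNilpotent f)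
    (β : (ZMod 4)[X] ≃ₐ[ZMod 4] (ZMod 4)[X]) (hβ : β X = -X + 1 + f)
    (hord : orderOf β = 2) :
    {g : (ZMod 4)[X] | ∀ σ ∈ Subgroup.zpowers β, σ g = g} =
      (Algebra.adjoin (ZMod 4)
        ({X * (-X + 1) + X * f} : Set ((ZMod 4)[X])) : Set ((ZMod 4)[X])) := by
  have hββX : β (β X) = X := by
    have h := pow_orderOf_eq_one β
    rw [hord, pow_two] at h
    exact congr($h X)
  have hw : X * (-X + 1) + X * f = X * β X := by rw [hβ]; ring
  have hβw : β (X * β X) = X * β X := by rw [map_mul, hββX, mul_comm]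
  have hf₀ : f.map ZMod.castHomFourTwo = 0 := (hf.map (mapRingHom _)).eq_zero
  ext g
  rw [Set.mem_ofPred_eq, β.forall_mem_zpowers_apply_eq_iff, SetLike.mem_coe, hw]
  refine ⟨mem_adjoin_of_apply_eq_self β.toAlgHom hβw ?_ ?_, ?_⟩
  · simp [hβ, hf₀, neg_add_eq_sub]
  · simp [← hw, hf₀, neg_add_eq_sub]
  · exact β.toAlgHom.apply_eq_self_of_mem_adjoin_singleton hβw
end

section
/- Let R = ℤ/4ℤ and let A be the subgroup of G(R) consisting of those automorphisms σ for which σ(x) - x is nilpotent. Let H be a subgroup of G(R) that is not contained in A and such that H ∩ A contains a non-identity element. Then the ring of invariants R[x]^H equals R[y², 2y], where y = x·(-x + 1). -/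
/-!
Every automorphism of `(ℤ/4)[x]` is `g ↦ g(x + c + 2w)` with `c ∈ {0, 1}`, and it lies in `A`
exactly when `c = 0`. As `(2w)² = 0`, Taylor expansion gives
`g(x + c + 2w) = g(x + c) + 2w·g'(x + c)`. A non-identity element of `H ∩ A` (so `w ≢ 0 mod 2`)
therefore forces `2g' = 0`, after which an element of `H ∖ A` forces `g(x + 1) = g`; conversely
these two conditions make `g` invariant under all of `G(R)`. Modulo 2 they say `ḡ' = 0` and
`ḡ(x + 1) = ḡ`, whence `ḡ ∈ 𝔽₂[x⁴ + x²] = 𝔽₂[ȳ²]`; subtracting a lift leaves `2u` with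
`ū(x + 1) = ū`, so `ū ∈ 𝔽₂[x² + x] = 𝔽₂[ȳ]` and `g ∈ R[y²] + 2R[y] = R[y², 2y]`.
-/

open Polynomial

/-- The subgroup `A` of `G(ℤ/4ℤ)` consisting of the automorphisms `σ` of `(ℤ/4ℤ)[x]`
for which `σ(x) - x` is nilpotent. -/
noncomputable def nilShiftSubgroup : Subgroup ((ZMod 4)[X] ≃ₐ[ZMod 4] (ZMod 4)[X]) where
  carrier := {σ | IsNilpotent (σ X - X)}
  one_mem' := by
    simp only [Set.mem_setOf_eq, AlgEquiv.one_apply, sub_self]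
    exact IsNilpotent.zero
  mul_mem' := by
    intro σ τ hσ hτ
    have h : (σ * τ) X - X = (σ X - X) + σ (τ X - X) := by
      show σ (τ X) - X = _
      rw [map_sub]
      ring
    have : IsNilpotent (σ (τ X - X)) := hτ.map σ.toAlgHom
    rw [Set.mem_setOf_eq, h]
    exact (Commute.all _ _).isNilpotent_add hσ this
  inv_mem' := by
    intro σ hσ
    show IsNilpotent (σ.symm X - X)
    have h : σ.symm X - X = -(σ.symm (σ X - X)) := by
      rw [map_sub, σ.symm_apply_apply]
      ring
    rw [h]
    exact (hσ.map σ.symm.toAlgHom).neg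

namespace Polynomial

variable {R : Type*} [CommRing R]

theorem comp_add_of_sq_eq_zero (g p h : R[X]) (hh : h ^ 2 = 0) :
    g.comp (p + h) = g.comp p + (derivative g).comp p * h := by
  simp only [comp, ← eval_map, ← derivative_map]
  exact eval_add_of_sq_eq_zero (g.map C) p h hh

theorem algHom_apply_eq_comp {F : Type*} [FunLike F R[X] R[X]] [AlgHomClass F R R[X] R[X]]
    (f : F) (p : R[X]) : f p = p.comp (f X) := by
  rw [comp_eq_aeval, aeval_algHom_apply, aeval_X_left_apply]

theorem natDegree_eq_one_of_comp_eq_X [Nontrivial R] [NoZeroDivisors R] {f g : R[X]}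
    (h : f.comp g = X) : g.natDegree = 1 := by
  have := congrArg natDegree h
  rw [natDegree_comp, natDegree_X] at this
  exact Nat.eq_one_of_mul_eq_one_left this

theorem taylor_divByMonic_and_modByMonic [Nontrivial R] {m : R[X]} (hm : m.Monic) {r : R}
    (hmr : taylor r m = m) (u : R[X]) :
    taylor r (u /ₘ m) = taylor r u /ₘ m ∧ taylor r (u %ₘ m) = taylor r u %ₘ m :=
  (div_modByMonic_unique _ _ hm
    ⟨by rw [← hmr, ← taylor_mul, ← map_add, hmr, modByMonic_add_div u m],
      by rw [degree_taylor]; exact degree_modByMonic_lt u hm⟩).imp Eq.symm Eq.symm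

theorem eq_C_of_natDegree_le_one_of_taylor_one_eq {u : R[X]} (hu : u.natDegree ≤ 1)
    (h : taylor 1 u = u) : u = C (u.coeff 0) := by
  obtain ⟨a, b, rfl⟩ : ∃ a b, u = C a * X + C b := ⟨_, _, eq_X_add_C_of_natDegree_le_one hu⟩
  have ha : a = 0 := by simpa [taylor_coeff_zero] using congrArg (coeff · 0) h
  simp [ha]

theorem eq_X_or_eq_X_add_one_of_natDegree_eq_one {g : (ZMod 2)[X]} (hg : g.natDegree = 1) :
    g = X ∨ g = X + 1 := by
  have hlead : g.coeff 1 = 1 := by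
    have := (leadingCoeff_ne_zero (p := g)).mpr fun h0 => by simp [h0] at hg
    rw [leadingCoeff, hg] at this
    revert this; generalize g.coeff 1 = a; revert a; decide
  rw [eq_X_add_C_of_natDegree_le_one hg.le, hlead, C_1, one_mul]
  rcases (by decide : ∀ b : ZMod 2, b = 0 ∨ b = 1) (g.coeff 0) with h | h <;> simp [h]

section CharTwo

variable [CharP R 2]

theorem taylor_one_X_sq_add_X : taylor (1 : R) (X ^ 2 + X) = X ^ 2 + X := by
  have h2 : (2 : R[X]) = 0 := CharP.ofNat_eq_zero R[X] 2
  rw [map_add, taylor_pow, taylor_X, C_1]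
  linear_combination (X + 1) * h2

theorem exists_eq_comp_X_sq_add_X_of_taylor_one_eq (u : R[X]) (hu : taylor 1 u = u) :
    ∃ Q : R[X], u = Q.comp (X ^ 2 + X) := by
  have : Nontrivial R := CharP.nontrivial_of_char_ne_one (by norm_num : 2 ≠ 1)
  have hm : (X ^ 2 + X : R[X]).Monic := by monicity!
  have hdeg : (X ^ 2 + X : R[X]).natDegree = 2 := by compute_degree!
  induction hn : u.natDegree using Nat.strong_induction_on generalizing u with
  | _ n ih =>
  rcases Nat.eq_zero_or_pos n with rfl | hpos
  · exact ⟨C (u.coeff 0), by rw [C_comp, ← eq_C_of_natDegree_eq_zero hn]⟩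
  obtain ⟨hq, hr⟩ := taylor_divByMonic_and_modByMonic hm taylor_one_X_sq_add_X u
  rw [hu] at hq hr
  obtain ⟨Q, hQ⟩ := ih _ (by rw [natDegree_divByMonic u hm, hn, hdeg]; omega) _ hq rfl
  have hr0 := eq_C_of_natDegree_le_one_of_taylor_one_eq
    (by have := natDegree_modByMonic_lt u hm (by rintro h; simp [h] at hdeg); omega) hr
  refine ⟨C ((u %ₘ (X ^ 2 + X)).coeff 0) + X * Q, ?_⟩
  rw [add_comp, C_comp, mul_comp, X_comp, ← hQ, ← hr0, modByMonic_add_div]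

theorem exists_eq_comp_X_pow_four_add_X_sq_of_derivative_eq_zero [NoZeroDivisors R] (u : R[X])
    (hd : derivative u = 0) (hu : taylor 1 u = u) : ∃ P : R[X], u = P.comp (X ^ 4 + X ^ 2) := by
  have h2 : (2 : R[X]) = 0 := CharP.ofNat_eq_zero R[X] 2
  obtain ⟨v, hv⟩ : ∃ v, u = expand R 2 v := ⟨_, (expand_contract 2 hd two_ne_zero).symm⟩
  have hshift : (X + C 1 : R[X]).comp (X ^ 2) = (X ^ 2).comp (X + C 1) := by
    rw [add_comp, X_comp, C_comp, pow_comp, X_comp, C_1]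
    linear_combination (-X) * h2
  have hv1 : taylor 1 v = v := by
    apply expand_injective two_pos
    rw [← hv, expand_eq_comp_X_pow, taylor_apply, comp_assoc, hshift, ← comp_assoc,
      ← expand_eq_comp_X_pow, ← hv, ← taylor_apply, hu]
  obtain ⟨Q, hQ⟩ := exists_eq_comp_X_sq_add_X_of_taylor_one_eq v hv1
  refine ⟨Q, ?_⟩
  rw [hv, hQ, expand_eq_comp_X_pow, comp_assoc]
  simp only [add_comp, pow_comp, X_comp, ← pow_mul]

end CharTwo

end Polynomial

namespace ZMod4

local notation "ψ" => ZMod.castHom (by norm_num : 2 ∣ 4) (ZMod 2)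

noncomputable def y : (ZMod 4)[X] := X * (-X + 1)

theorem four_eq_zero : (4 : (ZMod 4)[X]) = 0 := CharP.ofNat_eq_zero _ 4

theorem two_mul_sq (w : (ZMod 4)[X]) : (2 * w) ^ 2 = 0 := by
  linear_combination w ^ 2 * four_eq_zero

theorem two_dvd_iff_map_eq_zero (p : (ZMod 4)[X]) : 2 ∣ p ↔ p.map ψ = 0 := by
  have hcoeff : ∀ a : ZMod 4, a ∈ Ideal.span {2} ↔ ψ a = 0 := by
    simp only [Ideal.mem_span_singleton]; decide
  rw [← C_ofNat, ← Ideal.mem_span_singleton, ← Set.image_singleton, ← Ideal.map_span,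
    Ideal.mem_map_C_iff, Polynomial.ext_iff]
  simp [hcoeff]

theorem two_mul_eq_zero_iff (p : (ZMod 4)[X]) : 2 * p = 0 ↔ p.map ψ = 0 := by
  simp only [Polynomial.ext_iff, coeff_ofNat_mul, coeff_map, coeff_zero]
  refine forall_congr' fun n => ?_
  generalize p.coeff n = a
  revert a; decide

theorem isNilpotent_iff_two_dvd (p : (ZMod 4)[X]) : IsNilpotent p ↔ 2 ∣ p := by
  refine ⟨fun h => (two_dvd_iff_map_eq_zero p).mpr (h.map (mapRingHom ψ)).eq_zero, ?_⟩
  rintro ⟨w, rfl⟩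
  exact ⟨2, two_mul_sq w⟩

theorem map_aut_X_eq_X_or_eq_X_add_one (σ : (ZMod 4)[X] ≃ₐ[ZMod 4] (ZMod 4)[X]) :
    (σ X).map ψ = X ∨ (σ X).map ψ = X + 1 := by
  apply eq_X_or_eq_X_add_one_of_natDegree_eq_one
  apply natDegree_eq_one_of_comp_eq_X (f := (σ.symm X).map ψ)
  rw [← Polynomial.map_comp, ← algHom_apply_eq_comp, σ.apply_symm_apply, map_X]

section Automorphisms

variable {σ : (ZMod 4)[X] ≃ₐ[ZMod 4] (ZMod 4)[X]}

theorem exists_aut_X_eq_X_add_two_mul (hσ : σ ∈ nilShiftSubgroup) :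
    ∃ w, σ X = X + 2 * w := by
  obtain ⟨w, hw⟩ := (isNilpotent_iff_two_dvd _).mp hσ
  exact ⟨w, by linear_combination hw⟩

theorem exists_aut_X_eq_X_add_one_add_two_mul (hσ : σ ∉ nilShiftSubgroup) :
    ∃ w, σ X = X + 1 + 2 * w := by
  have hσX : (σ X).map ψ = X + 1 := (map_aut_X_eq_X_or_eq_X_add_one σ).resolve_left fun h =>
    hσ <| (isNilpotent_iff_two_dvd _).mpr <| (two_dvd_iff_map_eq_zero _).mpr <| by
      rw [Polynomial.map_sub, h, map_X, sub_self]
  obtain ⟨w, hw⟩ := (two_dvd_iff_map_eq_zero (σ X - (X + 1))).mpr (by simp [hσX])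
  exact ⟨w, by linear_combination hw⟩

theorem comp_add_two_mul {g : (ZMod 4)[X]} (hd : 2 * derivative g = 0) (p w : (ZMod 4)[X]) :
    g.comp (p + 2 * w) = g.comp p := by
  have h : (derivative g).comp p * (2 * w) = (2 * derivative g).comp p * w := by
    rw [mul_comp, ofNat_comp]; ring
  rw [comp_add_of_sq_eq_zero _ _ _ (two_mul_sq w), h, hd, zero_comp, zero_mul, add_zero]

theorem aut_apply_eq_self {g : (ZMod 4)[X]} (hs : taylor 1 g = g) (hd : 2 * derivative g = 0)
    (σ : (ZMod 4)[X] ≃ₐ[ZMod 4] (ZMod 4)[X]) : σ g = g := by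
  rw [algHom_apply_eq_comp]
  by_cases hσ : σ ∈ nilShiftSubgroup
  · obtain ⟨w, hw⟩ := exists_aut_X_eq_X_add_two_mul hσ
    rw [hw, comp_add_two_mul hd, comp_X]
  · obtain ⟨w, hw⟩ := exists_aut_X_eq_X_add_one_add_two_mul hσ
    rw [hw, comp_add_two_mul hd, ← C_1, ← taylor_apply, hs]

theorem two_mul_derivative_eq_zero_of_aut_apply_eq_self (hσA : σ ∈ nilShiftSubgroup)
    (hσ : σ ≠ 1) {g : (ZMod 4)[X]} (hg : σ g = g) : 2 * derivative g = 0 := by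
  obtain ⟨w, hw⟩ := exists_aut_X_eq_X_add_two_mul hσA
  have hw0 : w.map ψ ≠ 0 := fun h0 => hσ <| AlgEquiv.ext fun p => by
    rw [algHom_apply_eq_comp, hw, (two_mul_eq_zero_iff w).mpr h0, add_zero, comp_X,
      AlgEquiv.one_apply]
  have h : 2 * (derivative g * w) = 0 := by
    rw [algHom_apply_eq_comp, hw, comp_add_of_sq_eq_zero _ _ _ (two_mul_sq w), comp_X,
      comp_X] at hg
    linear_combination hg
  rw [two_mul_eq_zero_iff, Polynomial.map_mul] at h
  exact (two_mul_eq_zero_iff _).mpr ((mul_eq_zero.mp h).resolve_right hw0)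

theorem taylor_one_eq_of_aut_apply_eq_self (hσ : σ ∉ nilShiftSubgroup) {g : (ZMod 4)[X]}
    (hd : 2 * derivative g = 0) (hg : σ g = g) : taylor 1 g = g := by
  obtain ⟨w, hw⟩ := exists_aut_X_eq_X_add_one_add_two_mul hσ
  rwa [algHom_apply_eq_comp, hw, comp_add_two_mul hd, ← C_1, ← taylor_apply] at hg

end Automorphisms

theorem taylor_one_y_sq : taylor 1 (y ^ 2) = y ^ 2 := by
  simp only [y, taylor_apply, pow_comp, mul_comp, add_comp, neg_comp, X_comp, one_comp, C_1]
  linear_combination (X ^ 3 : (ZMod 4)[X]) * four_eq_zero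

theorem taylor_one_two_mul_y : taylor 1 (2 * y) = 2 * y := by
  simp only [y, taylor_apply, mul_comp, add_comp, neg_comp, X_comp, one_comp, ofNat_comp, C_1]
  linear_combination (-X : (ZMod 4)[X]) * four_eq_zero

theorem two_mul_derivative_y_sq : 2 * derivative (y ^ 2) = 0 := by
  rw [derivative_sq, C_ofNat]
  linear_combination (y * derivative y) * four_eq_zero

theorem two_mul_derivative_two_mul_y : 2 * derivative (2 * y) = 0 := by
  rw [derivative_mul, derivative_ofNat, zero_mul, zero_add]
  linear_combination derivative y * four_eq_zero

theorem map_y : y.map ψ = X ^ 2 + X := by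
  have h2 : (2 : (ZMod 2)[X]) = 0 := CharP.ofNat_eq_zero _ 2
  simp only [y, Polynomial.map_mul, Polynomial.map_add, Polynomial.map_neg, Polynomial.map_one,
    map_X]
  linear_combination (-X ^ 2 : (ZMod 2)[X]) * h2

theorem map_y_sq : (y ^ 2).map ψ = X ^ 4 + X ^ 2 := by
  have h2 : (2 : (ZMod 2)[X]) = 0 := CharP.ofNat_eq_zero _ 2
  rw [Polynomial.map_pow, map_y]
  linear_combination (X ^ 3 : (ZMod 2)[X]) * h2

theorem aut_apply_eq_self_of_mem_adjoin {g : (ZMod 4)[X]}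
    (hg : g ∈ Algebra.adjoin (ZMod 4) {y ^ 2, 2 * y}) (σ : (ZMod 4)[X] ≃ₐ[ZMod 4] (ZMod 4)[X]) :
    σ g = g := by
  have hle : Algebra.adjoin (ZMod 4) {y ^ 2, 2 * y} ≤
      AlgHom.equalizer (σ : (ZMod 4)[X] →ₐ[ZMod 4] (ZMod 4)[X]) (AlgHom.id _ _) := by
    rw [Algebra.adjoin_le_iff]
    rintro _ (rfl | rfl)
    · exact aut_apply_eq_self taylor_one_y_sq two_mul_derivative_y_sq σ
    · exact aut_apply_eq_self taylor_one_two_mul_y two_mul_derivative_two_mul_y σ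
  exact hle hg

theorem comp_y_sq_mem_adjoin (P : (ZMod 4)[X]) :
    P.comp (y ^ 2) ∈ Algebra.adjoin (ZMod 4) {y ^ 2, 2 * y} := by
  rw [comp_eq_aeval]
  exact Algebra.adjoin_mono (by simp) (aeval_mem_adjoin_singleton _ _)

theorem two_mul_comp_y_mem_adjoin (Q : (ZMod 4)[X]) :
    2 * Q.comp y ∈ Algebra.adjoin (ZMod 4) {y ^ 2, 2 * y} := by
  have hy2 : y ^ 2 ∈ Algebra.adjoin (ZMod 4) {y ^ 2, 2 * y} := Algebra.subset_adjoin (by simp)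
  have h2y : 2 * y ∈ Algebra.adjoin (ZMod 4) {y ^ 2, 2 * y} := Algebra.subset_adjoin (by simp)
  induction Q using Polynomial.induction_on' with
  | add p q hp hq => rw [add_comp, mul_add]; exact add_mem hp hq
  | monomial n a =>
    rw [monomial_comp, mul_left_comm, ← smul_eq_C_mul]
    refine Subalgebra.smul_mem _ ?_ a
    obtain ⟨k, rfl | rfl⟩ := Nat.even_or_odd' n
    · rw [show 2 * y ^ (2 * k) = 2 * (y ^ 2) ^ k by ring]
      exact mul_mem (ofNat_mem (Algebra.adjoin (ZMod 4) {y ^ 2, 2 * y}) 2) (pow_mem hy2 k)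
    · rw [show 2 * y ^ (2 * k + 1) = (y ^ 2) ^ k * (2 * y) by ring]
      exact mul_mem (pow_mem hy2 k) h2y

theorem exists_eq_comp_y_sq_add_two_mul {g : (ZMod 4)[X]} (hs : taylor 1 g = g)
    (hd : 2 * derivative g = 0) :
    ∃ P u : (ZMod 4)[X], g = P.comp (y ^ 2) + 2 * u ∧ taylor 1 (u.map ψ) = u.map ψ := by
  obtain ⟨P, hP⟩ := exists_eq_comp_X_pow_four_add_X_sq_of_derivative_eq_zero (g.map ψ)
    (by rw [derivative_map, ← two_mul_eq_zero_iff, hd]) (by rw [← map_one ψ, ← map_taylor, hs])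
  obtain ⟨P, rfl⟩ := map_surjective ψ (ZMod.castHom_surjective _) P
  obtain ⟨u, hu⟩ := (two_dvd_iff_map_eq_zero (g - P.comp (y ^ 2))).mpr
    (by rw [Polynomial.map_sub, Polynomial.map_comp, map_y_sq, ← hP, sub_self])
  refine ⟨P, u, by linear_combination hu, ?_⟩
  have h2u : 2 * (taylor 1 u - u) = 0 := by
    have hPs : taylor 1 (P.comp (y ^ 2)) = P.comp (y ^ 2) := by
      rw [taylor_apply, comp_assoc, ← taylor_apply, taylor_one_y_sq]
    have h := congrArg (taylor 1) hu
    rw [map_sub, hs, hPs, taylor_mul, ← C_ofNat, taylor_C, C_ofNat] at h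
    linear_combination -h + hu
  rwa [two_mul_eq_zero_iff, Polynomial.map_sub, sub_eq_zero, map_taylor, map_one] at h2u

theorem exists_two_mul_eq_two_mul_comp_y {u : (ZMod 4)[X]} (hu : taylor 1 (u.map ψ) = u.map ψ) :
    ∃ Q : (ZMod 4)[X], 2 * u = 2 * Q.comp y := by
  obtain ⟨Q, hQ⟩ := exists_eq_comp_X_sq_add_X_of_taylor_one_eq _ hu
  obtain ⟨Q, rfl⟩ := map_surjective ψ (ZMod.castHom_surjective _) Q
  obtain ⟨v, hv⟩ := (two_dvd_iff_map_eq_zero (u - Q.comp y)).mpr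
    (by rw [Polynomial.map_sub, Polynomial.map_comp, map_y, ← hQ, sub_self])
  exact ⟨Q, by linear_combination (2 : (ZMod 4)[X]) * hv + v * four_eq_zero⟩

theorem mem_adjoin_of_taylor_one_eq {g : (ZMod 4)[X]} (hs : taylor 1 g = g)
    (hd : 2 * derivative g = 0) : g ∈ Algebra.adjoin (ZMod 4) {y ^ 2, 2 * y} := by
  obtain ⟨P, u, rfl, hu⟩ := exists_eq_comp_y_sq_add_two_mul hs hd
  obtain ⟨Q, hQ⟩ := exists_two_mul_eq_two_mul_comp_y hu
  rw [hQ]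
  exact add_mem (comp_y_sq_mem_adjoin P) (two_mul_comp_y_mem_adjoin Q)

end ZMod4

open ZMod4

/-- Theorem: over `R = ℤ/4ℤ`, if a subgroup `H` of `G(R)` is not contained in `A` and
`H ∩ A` is nontrivial, then the ring of invariants `R[x]^H` is `R[y², 2y]`,
where `y = x·(-x+1)`. -/
theorem zmod4_invariants_of_mixed_subgroup
    (H : Subgroup ((ZMod 4)[X] ≃ₐ[ZMod 4] (ZMod 4)[X]))
    (h1 : ¬ H ≤ nilShiftSubgroup) (h2 : H ⊓ nilShiftSubgroup ≠ ⊥) :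
    {g : (ZMod 4)[X] | ∀ σ ∈ H, σ g = g} =
      (Algebra.adjoin (ZMod 4)
        ({(X * (-X + 1)) ^ 2, 2 * (X * (-X + 1))} : Set ((ZMod 4)[X])) : Set ((ZMod 4)[X])) := by
  obtain ⟨⟨σ, hσ⟩, hσ1⟩ := Subgroup.ne_bot_iff_exists_ne_one.mp h2
  obtain ⟨hσH, hσA⟩ := Subgroup.mem_inf.mp hσ
  obtain ⟨τ, hτH, hτA⟩ := SetLike.not_le_iff_exists.mp h1
  ext g
  refine ⟨fun hg => ?_, fun hg ρ _ => aut_apply_eq_self_of_mem_adjoin hg ρ⟩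
  have hd := two_mul_derivative_eq_zero_of_aut_apply_eq_self hσA
    (fun h => hσ1 (Subtype.ext h)) (hg σ hσH)
  exact mem_adjoin_of_taylor_one_eq (taylor_one_eq_of_aut_apply_eq_self hτA hd (hg τ hτH)) hd
end

section
/- Let n > 1 be an integer and let u, v be integers with gcd(u, n) = gcd(v, n) = 1, and let a, b be integers. Then the elements α and β of B(ℤ_n) defined by α(x) = u·x + a and β(x) = v·x + b are conjugate in the group B(ℤ_n) if and only if u ≡ v (mod n) and gcd(u - 1, a, n) = gcd(u - 1, b, n), where gcd(−, −, −) denotes the greatest common divisor of three integers. -/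
/-!
Conjugating `x ↦ u x + a` by `g : x ↦ w x + c` keeps `u` and replaces `a` by
`w a + (1 - u) c`, so the conjugates are the `b` with `v = u` and `b ≡ w a` modulo the ideal
`(u - 1)` for some unit `w`. Reducing modulo `d = gcd(u - 1, n)`, which identifies `ℤ_n / (u - 1)`
with `ℤ_d`, and using that units of `ℤ_n` surject onto units of `ℤ_d`, this says that `a` and `b`
are associated in `ℤ_d`; every residue `a` is associated with `gcd(a, d)`, so this happens exactly
when `gcd(a, d) = gcd(b, d)`.
-/

open Polynomial

/-- The group `B_x(R)` of `R`-automorphisms of `R[x]` of basic form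
`x ↦ u·x + a` with `u` a unit of `R` and `a ∈ R`. -/
def Bx (R : Type*) [CommRing R] : Subgroup (R[X] ≃ₐ[R] R[X]) where
  carrier := {σ | ∃ u : Rˣ, ∃ a : R, σ X = C (u : R) * X + C a}
  one_mem' := ⟨1, 0, by simp⟩
  mul_mem' := by
    rintro σ τ ⟨u, a, hu⟩ ⟨v, b, hv⟩
    refine ⟨u * v, (v : R) * a + b, ?_⟩
    show σ (τ X) = _
    rw [hv, map_add, map_mul, ← Polynomial.algebraMap_eq, AlgEquiv.commutes,
      AlgEquiv.commutes, Polynomial.algebraMap_eq, hu]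
    push_cast
    simp only [C_mul, C_add]
    ring
  inv_mem' := by
    rintro σ ⟨u, a, hu⟩
    refine ⟨u⁻¹, -(((u⁻¹ : Rˣ) : R) * a), ?_⟩
    show σ.symm X = _
    have h : σ.symm (σ X) = X := σ.symm_apply_apply X
    rw [hu, map_add, map_mul, ← Polynomial.algebraMap_eq, AlgEquiv.commutes,
      AlgEquiv.commutes, Polynomial.algebraMap_eq] at h
    have key : C ((u⁻¹ : Rˣ) : R) * C ((u : Rˣ) : R) = 1 := by
      rw [← C_mul]; simp
    rw [C_neg, C_mul]
    linear_combination C ((u⁻¹ : Rˣ) : R) * h - σ.symm X * key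

namespace Polynomial

variable {R : Type*} [CommRing R]

theorem C_mul_X_add_C_inj {p q r s : R} :
    C p * X + C q = C r * X + C s ↔ p = r ∧ q = s := by
  refine ⟨fun h ↦ ⟨?_, ?_⟩, fun ⟨hp, hq⟩ ↦ hp ▸ hq ▸ rfl⟩
  · simpa using congrArg (coeff · 1) h
  · simpa using congrArg (coeff · 0) h

theorem algEquiv_apply_C_mul_X_add_C (σ : R[X] ≃ₐ[R] R[X]) (u a : R) :
    σ (C u * X + C a) = C u * σ X + C a := by
  simp only [map_add, map_mul, C_eq_algebraMap, AlgEquiv.commutes]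

theorem algEquiv_eq_iff_apply_X {σ τ : R[X] ≃ₐ[R] R[X]} : σ = τ ↔ σ X = τ X :=
  ⟨fun h ↦ h ▸ rfl, fun h ↦ AlgEquiv.coe_toAlgHom_injective (algHom_ext h)⟩

theorem eq_conj_iff_of_X_eq {α β g : R[X] ≃ₐ[R] R[X]} {u v a b w c : R}
    (hα : α X = C u * X + C a) (hβ : β X = C v * X + C b) (hg : g X = C w * X + C c) :
    β = g⁻¹ * α * g ↔ v * w = w * u ∧ v * c + b = w * a + c := by
  have hgβ : (g * β) X = C (v * w) * X + C (v * c + b) := by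
    simp only [AlgEquiv.mul_apply, hβ, hg, algEquiv_apply_C_mul_X_add_C, C_mul, C_add]
    ring
  have hαg : (α * g) X = C (w * u) * X + C (w * a + c) := by
    simp only [AlgEquiv.mul_apply, hα, hg, algEquiv_apply_C_mul_X_add_C, C_mul, C_add]
    ring
  rw [mul_assoc, eq_inv_mul_iff_mul_eq, algEquiv_eq_iff_apply_X, hgβ, hαg, C_mul_X_add_C_inj]

theorem exists_mem_Bx_conj_iff {α β : R[X] ≃ₐ[R] R[X]} {u v a b : R}
    (hα : α X = C u * X + C a) (hβ : β X = C v * X + C b) :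
    (∃ g ∈ Bx R, β = g⁻¹ * α * g) ↔ v = u ∧ ∃ w : Rˣ, u - 1 ∣ b - a * w := by
  constructor
  · rintro ⟨g, ⟨w, c, hg⟩, hconj⟩
    obtain ⟨h1, h0⟩ := (eq_conj_iff_of_X_eq hα hβ hg).mp hconj
    obtain rfl : v = u := w.isUnit.mul_right_cancel (h1.trans (mul_comm _ _))
    exact ⟨rfl, w, -c, by linear_combination h0⟩
  · rintro ⟨rfl, w, c, hc⟩
    refine ⟨algEquivCMulXAddC (w : R) (-c), ⟨w, -c, by simp⟩, ?_⟩
    rw [eq_conj_iff_of_X_eq (w := (w : R)) (c := -c) hα hβ (by simp)]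
    exact ⟨mul_comm _ _, by linear_combination hc⟩

end Polynomial

namespace ZMod

theorem isUnit_intCast_of_gcd_eq_one {d : ℕ} {a : ℤ} (h : Int.gcd a d = 1) :
    IsUnit (a : ZMod d) := by
  have := (Int.isCoprime_iff_gcd_eq_one.mpr h).intCast (R := ZMod d)
  rwa [Int.cast_natCast, natCast_self, isCoprime_zero_right] at this

theorem gcd_dvd_of_intCast_dvd_intCast {d : ℕ} {x y : ℤ} (h : (x : ZMod d) ∣ (y : ZMod d)) :
    (Int.gcd x d : ℤ) ∣ y := by
  obtain ⟨c, hc⟩ := h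
  rw [← intCast_zmod_cast c, ← Int.cast_mul, intCast_eq_intCast_iff_dvd_sub] at hc
  have := dvd_sub ((Int.gcd_dvd_left x d).mul_right (cast c : ℤ))
    ((Int.gcd_dvd_right x d).trans hc)
  rwa [sub_sub_cancel] at this

theorem associated_intCast_gcd {d : ℕ} [NeZero d] (a : ℤ) :
    Associated ((Int.gcd a d : ℤ) : ZMod d) (a : ZMod d) := by
  set e := Int.gcd a d
  have he : 0 < e := Int.gcd_pos_of_ne_zero_right a (by exact_mod_cast NeZero.ne d)
  have ha : a = e * (a / e) := (Int.mul_ediv_cancel' (Int.gcd_dvd_left a d)).symm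
  have hd : d = e * (d / e) := (Nat.mul_div_cancel' (Int.gcd_dvd_natAbs_right a d)).symm
  have hcop : Int.gcd (a / e) (d / e : ℕ) = 1 := by
    simpa using Int.gcd_div_gcd_div_gcd he
  -- lift the unit `a / e` of `ZMod (d / e)` to a unit `W` of `ZMod d`; then `e * W = a`
  obtain ⟨W, hW⟩ := unitsMap_surjective (m := d) (Dvd.intro_left e hd.symm)
    (isUnit_intCast_of_gcd_eq_one hcop).unit
  refine ⟨W, ?_⟩
  have hWval := congrArg Units.val hW
  rw [unitsMap_val, IsUnit.unit_spec, ← intCast_cast, intCast_eq_intCast_iff_dvd_sub] at hWval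
  rw [← intCast_zmod_cast (W : ZMod d), ← Int.cast_mul, intCast_eq_intCast_iff_dvd_sub]
  have hd' : (d : ℤ) = e * (d / e : ℕ) := by exact_mod_cast hd
  rw [hd', ha, ← mul_sub]
  exact mul_dvd_mul_left _ hWval

theorem intCast_associated_intCast_iff {d : ℕ} [NeZero d] {a b : ℤ} :
    Associated (a : ZMod d) (b : ZMod d) ↔ Int.gcd a d = Int.gcd b d := by
  refine ⟨fun h ↦ Nat.dvd_antisymm ?_ ?_, fun h ↦ ?_⟩
  · exact Int.dvd_gcd (gcd_dvd_of_intCast_dvd_intCast h.dvd) (Int.gcd_dvd_right a d)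
  · exact Int.dvd_gcd (gcd_dvd_of_intCast_dvd_intCast h.symm.dvd) (Int.gcd_dvd_right b d)
  · exact (associated_intCast_gcd a).symm.trans (h ▸ associated_intCast_gcd b)

theorem castHom_gcd_eq_zero_iff {n : ℕ} (m : ℤ) (y : ZMod n) :
    castHom (Int.gcd_dvd_natAbs_right m n) (ZMod (Int.gcd m n)) y = 0 ↔ (m : ZMod n) ∣ y := by
  refine ⟨fun h ↦ ?_, fun ⟨c, hc⟩ ↦ ?_⟩
  · rw [← intCast_zmod_cast y, map_intCast, intCast_zmod_eq_zero_iff_dvd] at h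
    obtain ⟨t, ht⟩ := h
    refine ⟨(Int.gcdA m n * t : ℤ), ?_⟩
    rw [← intCast_zmod_cast y, ht, Int.gcd_eq_gcd_ab m n]
    push_cast
    rw [natCast_self]
    ring
  · rw [hc, map_mul, map_intCast, (intCast_zmod_eq_zero_iff_dvd _ _).mpr (Int.gcd_dvd_left m n),
      zero_mul]

theorem exists_unit_intCast_dvd_iff {n : ℕ} [NeZero n] (m a b : ℤ) :
    (∃ w : (ZMod n)ˣ, (m : ZMod n) ∣ b - a * w) ↔
      Associated (a : ZMod (Int.gcd m n)) (b : ZMod (Int.gcd m n)) := by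
  constructor
  · rintro ⟨w, hw⟩
    refine ⟨unitsMap (Int.gcd_dvd_natAbs_right m n) w, ?_⟩
    rw [← castHom_gcd_eq_zero_iff, map_sub, map_mul, map_intCast, map_intCast, sub_eq_zero] at hw
    exact hw.symm
  · rintro ⟨w, hw⟩
    obtain ⟨W, rfl⟩ := unitsMap_surjective (Int.gcd_dvd_natAbs_right m n) w
    refine ⟨W, ?_⟩
    rw [← castHom_gcd_eq_zero_iff, map_sub, map_mul, map_intCast, map_intCast, sub_eq_zero]
    exact hw.symm

end ZMod

theorem zmodn_conjugate_iff_general (n : ℕ) (hn : 1 < n) (u v a b : ℤ)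
    (α β : (ZMod n)[X] ≃ₐ[ZMod n] (ZMod n)[X])
    (hα : α X = C ((u : ZMod n)) * X + C ((a : ZMod n)))
    (hβ : β X = C ((v : ZMod n)) * X + C ((b : ZMod n))) :
    (∃ g ∈ Bx (ZMod n), β = g⁻¹ * α * g) ↔
      (u ≡ v [ZMOD (n : ℤ)] ∧
        Int.gcd (Int.gcd (u - 1) a) n = Int.gcd (Int.gcd (u - 1) b) n) := by
  have : NeZero n := ⟨by omega⟩
  have : NeZero (Int.gcd (u - 1) n) :=
    ⟨(Int.gcd_pos_of_ne_zero_right _ (by exact_mod_cast NeZero.ne n)).ne'⟩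
  have hcast : ((u - 1 : ℤ) : ZMod n) = (u : ZMod n) - 1 := by rw [Int.cast_sub, Int.cast_one]
  rw [Polynomial.exists_mem_Bx_conj_iff hα hβ, ← hcast, ZMod.exists_unit_intCast_dvd_iff,
    ZMod.intCast_associated_intCast_iff, eq_comm, ZMod.intCast_eq_intCast_iff,
    Int.gcd_comm (u - 1) a, Int.gcd_comm (u - 1) b, Int.gcd_assoc, Int.gcd_assoc]

/-- Theorem: the elements `α(x) = u·x + a` and `β(x) = v·x + b` of `B(ℤ_n)` are conjugate
iff `u ≡ v (mod n)` and `gcd(u-1, a, n) = gcd(u-1, b, n)`. -/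
theorem zmodn_conjugate_iff (n : ℕ) (hn : 1 < n) (u v a b : ℤ)
    (hu : Int.gcd u n = 1) (hv : Int.gcd v n = 1)
    (α β : (ZMod n)[X] ≃ₐ[ZMod n] (ZMod n)[X])
    (hα : α X = C ((u : ZMod n)) * X + C ((a : ZMod n)))
    (hβ : β X = C ((v : ZMod n)) * X + C ((b : ZMod n))) :
    (∃ g ∈ Bx (ZMod n), β = g⁻¹ * α * g) ↔
      (u ≡ v [ZMOD (n : ℤ)] ∧
        Int.gcd (Int.gcd (u - 1) a) n = Int.gcd (Int.gcd (u - 1) b) n) :=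
  zmodn_conjugate_iff_general n hn u v a b α β hα hβ
end
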